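/- arXiv:2407.04672 — 2 statements merged into one kernel-verified Lean document; each statement's English description precedes it below -/
import Mathlib

section
/- Let μ be the Gibbs distribution of a spin system on a finite graph G = (V,E) with a partition V = U_1 ⊎ ⋯ ⊎ U_k and let 0 ≤ ℓ ≤ k−1. Suppose there exist γ_0, γ_1, …, γ_{ℓ−1} such that for every 0 ≤ r ≤ ℓ−1, every R ⊆ [k] with |R| = r, every pinning τ ∈ [q]^{U_R}, and every f: [q]^V → ℝ, it holds that Var_{μ^τ}[f] ≤ (γ_r/(k−r)) · Σ_{j ∈ [k]∖R} μ^τ[Var_{V∖U_{R∪{j}}}[f]] (i.e., the relaxation time of the (k−r)↔1 down-up walk on μ^τ is at most γ_r). Then for every f: [q]^V → ℝ, Var_μ[f] ≤ ((∏_{i=0}^{ℓ−1} γ_i)/C(k,ℓ)) · Σ_{R ⊆ [k], |R| = ℓ} μ[Var_{V∖U_R}[f]], i.e., the relaxation time of the k↔ℓ down-up walk satisfies T_rel(k,ℓ) ≤ ∏_{i=0}^{ℓ−1} γ_i. -/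
/-!
Induction on `ℓ`. Conditioning `μ` on the blocks of an `m`-set `R` yields the pinned Gibbs
distribution, so the local bound at level `m`, averaged over the pinning, gives
`μ[Var_{U_Rᶜ} f] ≤ γ_m/(k-m) · ∑_{j ∉ R} μ[Var_{U_{R∪{j}}ᶜ} f]`: the inner conditional
variances of the pinned measure are those of `μ` itself (tower property). Summing over all
`m`-sets counts each `(m+1)`-set `m+1` times, and `C(k,m+1)·(m+1) = C(k,m)·(k-m)` turns the
accumulated constants into `∏ γ_i / C(k,ℓ)`.
-/

open Finset
open scoped BigOperators Classical

namespace Paper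

/-- Configurations: assignments of one of `q` spins to each of `n` vertices. -/
abbrev Config (n q : ℕ) := Fin n → Fin q

/-- A spin system on a graph `G` on vertex set `Fin n` with spin set `Fin q`:
nonnegative external fields and nonnegative symmetric interaction matrices. -/
structure SpinSystem (n q : ℕ) (G : SimpleGraph (Fin n)) where
  b : Fin n → Fin q → ℝ
  A : Fin n → Fin n → Fin q → Fin q → ℝ
  b_nonneg : ∀ v a, 0 ≤ b v a
  A_nonneg : ∀ v w a c, 0 ≤ A v w a c
  A_symm : ∀ v w a c, A v w a c = A w v c a

variable {n q k : ℕ}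

/-- The number of neighbours of `v` (in `G`) lying inside `Λ`. -/
noncomputable def degIn (G : SimpleGraph (Fin n)) (Λ : Finset (Fin n)) (v : Fin n) : ℕ :=
  (Λ.filter fun w => G.Adj v w).card

/-- The maximum degree of `G`. -/
noncomputable def maxDeg (G : SimpleGraph (Fin n)) : ℕ :=
  univ.sup fun v => degIn G univ v

/-- The edges of `G`, listed as ordered pairs `p` with `p.1 < p.2`. -/
noncomputable def edgePairs (G : SimpleGraph (Fin n)) : Finset (Fin n × Fin n) :=
  univ.filter fun p => p.1 < p.2 ∧ G.Adj p.1 p.2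

/-- Conditional Gibbs weight: the free set is `Λ`, and the pinning uses the values
of `τ` outside of `Λ`.  Edges lying entirely outside `Λ` are dropped. -/
noncomputable def condWeight {G : SimpleGraph (Fin n)} (S : SpinSystem n q G)
    (Λ : Finset (Fin n)) (τ σ : Config n q) : ℝ :=
  (if ∀ v, v ∉ Λ → σ v = τ v then (1 : ℝ) else 0)
    * (∏ v ∈ Λ, S.b v (σ v))
    * ∏ p ∈ (edgePairs G).filter (fun p => p.1 ∈ Λ ∨ p.2 ∈ Λ),
        S.A p.1 p.2 (σ p.1) (σ p.2)

/-- The conditional Gibbs distribution `μ^τ` with free set `Λ` and pinning `τ`. -/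
noncomputable def condDist {G : SimpleGraph (Fin n)} (S : SpinSystem n q G)
    (Λ : Finset (Fin n)) (τ : Config n q) : Config n q → ℝ :=
  fun σ => condWeight S Λ τ σ / ∑ σ' : Config n q, condWeight S Λ τ σ'

/-- The Gibbs distribution of the spin system. -/
noncomputable def gibbsDist {G : SimpleGraph (Fin n)} (S : SpinSystem n q G) :
    Config n q → ℝ :=
  fun σ => condWeight S univ σ σ / ∑ σ' : Config n q, condWeight S univ σ' σ'

/-- Every conditional weight has positive total mass. -/
def PosCondMass {G : SimpleGraph (Fin n)} (S : SpinSystem n q G) : Prop :=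
  ∀ (Λ : Finset (Fin n)) (τ : Config n q), 0 < ∑ σ : Config n q, condWeight S Λ τ σ

/-- Expectation of `f` under (the finitely supported density) `μ`. -/
noncomputable def expVal (μ f : Config n q → ℝ) : ℝ := ∑ σ, μ σ * f σ

/-- Variance of `f` under `μ`. -/
noncomputable def varD (μ f : Config n q → ℝ) : ℝ :=
  expVal μ fun σ => (f σ - expVal μ f) ^ 2

/-- `μ` conditioned to agree with `σ₀` on the set `T`. -/
noncomputable def restrictDist (μ : Config n q → ℝ) (T : Finset (Fin n)) (σ₀ : Config n q) :
    Config n q → ℝ :=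
  fun σ => (if ∀ v ∈ T, σ v = σ₀ v then μ σ else 0)
    / ∑ σ' ∈ univ.filter (fun σ' : Config n q => ∀ v ∈ T, σ' v = σ₀ v), μ σ'

/-- `μ[Var_S[f]]`: the average over `σ ~ μ` of the variance of `f` under `μ`
conditioned on the coordinates outside the free set `Sfree`. -/
noncomputable def avgCondVar (μ : Config n q → ℝ) (Sfree : Finset (Fin n))
    (f : Config n q → ℝ) : ℝ :=
  ∑ σ, μ σ * varD (restrictDist μ Sfreeᶜ σ) f

/-- `C` is an upper bound on the relaxation time of the Glauber dynamics on `μ`: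
approximate tensorization of variance with constant `C`. -/
def IsRelaxBound (μ : Config n q → ℝ) (C : ℝ) : Prop :=
  0 ≤ C ∧ ∀ f : Config n q → ℝ,
    varD μ f ≤ C / (n : ℝ) * ∑ v : Fin n, avgCondVar μ {v} f

/-- `π` is a coupling of `μ` and `ν`. -/
structure IsCoupling (μ ν : Config n q → ℝ) (π : Config n q → Config n q → ℝ) : Prop where
  nonneg : ∀ x y, 0 ≤ π x y
  fst_marginal : ∀ x, ∑ y, π x y = μ x
  snd_marginal : ∀ y, ∑ x, π x y = ν y

/-- Weighted Hamming distance with weight function `ρ`. -/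
noncomputable def hamW (ρ : Fin n → ℕ) (x y : Config n q) : ℝ :=
  ∑ v ∈ univ.filter (fun v => x v ≠ y v), (ρ v : ℝ)

/-- Expected weighted Hamming distance under a coupling `π`. -/
noncomputable def expHam (π : Config n q → Config n q → ℝ) (ρ : Fin n → ℕ) : ℝ :=
  ∑ x, ∑ y, π x y * hamW ρ x y

/-- Coupling independence (with a fixed witnessing weight `ρ`) of the Gibbs
distribution of the spin system `S`, using Gibbs conditional distributions. -/
def CoupIndepWith {G : SimpleGraph (Fin n)} (S : SpinSystem n q G) (ρ : Fin n → ℕ)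
    (C : ℝ) : Prop :=
  (∀ v, 0 < ρ v) ∧
  ∀ (P : Finset (Fin n)) (v₀ : Fin n) (σ₁ σ₂ : Config n q),
    v₀ ∈ P → σ₁ v₀ ≠ σ₂ v₀ → (∀ v ∈ P, v ≠ v₀ → σ₁ v = σ₂ v) →
    ∃ π, IsCoupling (condDist S Pᶜ σ₁) (condDist S Pᶜ σ₂) π ∧
      expHam π ρ ≤ C * (ρ v₀ : ℝ)

/-- The spin system `S` is `C`-coupling independent. -/
def CoupIndep {G : SimpleGraph (Fin n)} (S : SpinSystem n q G) (C : ℝ) : Prop :=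
  ∃ ρ : Fin n → ℕ, CoupIndepWith S ρ C

/-- `C`-coupling independence for a bare distribution `μ`, using conditionals
obtained by restriction. -/
def CoupIndepDist (μ : Config n q → ℝ) (C : ℝ) : Prop :=
  ∃ ρ : Fin n → ℕ, (∀ v, 0 < ρ v) ∧
  ∀ (P : Finset (Fin n)) (v₀ : Fin n) (σ₁ σ₂ : Config n q),
    v₀ ∈ P → σ₁ v₀ ≠ σ₂ v₀ → (∀ v ∈ P, v ≠ v₀ → σ₁ v = σ₂ v) →
    ∃ π, IsCoupling (restrictDist μ P σ₁) (restrictDist μ P σ₂) π ∧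
      expHam π ρ ≤ C * (ρ v₀ : ℝ)

/-- `Λ ∈ D(η)`: the induced subgraph `G[Λ]` has maximum degree at most `η·Δ`. -/
def InDeta (G : SimpleGraph (Fin n)) (η : ℝ) (Λ : Finset (Fin n)) : Prop :=
  ∀ v ∈ Λ, (degIn G Λ v : ℝ) ≤ η * (maxDeg G : ℝ)

/-- `U` is a partition of the vertex set into `k` (possibly empty) parts. -/
def IsPartition (U : Fin k → Finset (Fin n)) : Prop :=
  (∀ i j, i ≠ j → Disjoint (U i) (U j)) ∧ ∀ v : Fin n, ∃ i, v ∈ U i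

/-- A `(ξ,k)`-degree partition of `G`. -/
def IsDegreePartition (G : SimpleGraph (Fin n)) (ξ : ℝ) (U : Fin k → Finset (Fin n)) :
    Prop :=
  IsPartition U ∧ ∀ (v : Fin n) (i : Fin k),
    (degIn G (U i) v : ℝ) ≤ (1 + ξ) * (maxDeg G : ℝ) / (k : ℝ)

/-- `U_R = ⋃_{i ∈ R} U_i`. -/
noncomputable def unionBlocks (U : Fin k → Finset (Fin n)) (R : Finset (Fin k)) :
    Finset (Fin n) :=
  R.biUnion U

/-- The Glauber update `P_v` at vertex `v` for the distribution `μ`. -/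
noncomputable def glauberUpdate (μ : Config n q → ℝ) (v : Fin n) (x y : Config n q) : ℝ :=
  if ∀ u, u ≠ v → y u = x u then
    (if 0 < ∑ σ ∈ univ.filter (fun σ : Config n q => ∀ u, u ≠ v → σ u = x u), μ σ then
      μ y / ∑ σ ∈ univ.filter (fun σ : Config n q => ∀ u, u ≠ v → σ u = x u), μ σ
    else if y = x then 1 else 0)
  else 0

/-- The transition matrix of the Glauber dynamics on `μ`. -/
noncomputable def glauberP (μ : Config n q → ℝ) : Config n q → Config n q → ℝ :=
  fun x y => (1 / (n : ℝ)) * ∑ v : Fin n, glauberUpdate μ v x y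

/-- One step of a Markov kernel applied to a distribution. -/
noncomputable def stepD (P : Config n q → Config n q → ℝ) (ν : Config n q → ℝ) :
    Config n q → ℝ :=
  fun y => ∑ x, ν x * P x y

/-- The Dirac distribution at `x₀`. -/
noncomputable def delta (x₀ : Config n q) : Config n q → ℝ :=
  fun y => if y = x₀ then 1 else 0

/-- Total variation distance. -/
noncomputable def dTV (μ ν : Config n q → ℝ) : ℝ := (1 / 2) * ∑ σ, |μ σ - ν σ|

/-- TV distance to `μ` after `t` steps of the Glauber dynamics on `μ` started at `x₀`. -/
noncomputable def glauberDist (μ : Config n q → ℝ) (x₀ : Config n q) (t : ℕ) : ℝ :=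
  dTV ((stepD (glauberP μ))^[t] (delta x₀)) μ

/-- Coordinatewise partial order on configurations induced by the per-vertex
total orders `le`. -/
def ConfLE (le : Fin n → Fin q → Fin q → Prop) (x y : Config n q) : Prop :=
  ∀ v, le v (x v) (y v)

/-- Stochastic domination with respect to the order `le`. -/
def StochDom (le : Fin n → Fin q → Fin q → Prop) (μ ν : Config n q → ℝ) : Prop :=
  ∃ π, IsCoupling μ ν π ∧ ∀ x y, π x y ≠ 0 → ConfLE le x y

/-- `μ` is a monotone spin system w.r.t. the per-vertex orders `le`. -/
def MonotoneSystem (le : Fin n → Fin q → Fin q → Prop) (μ : Config n q → ℝ) : Prop :=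
  ∀ (v : Fin n) (x y : Config n q), ConfLE le x y →
    StochDom le (glauberUpdate μ v x) (glauberUpdate μ v y)

/-- Hardcore weight: spin `1` means occupied. -/
noncomputable def hcWeight (G : SimpleGraph (Fin n)) (lam : ℝ) (σ : Config n 2) : ℝ :=
  if ∀ u v, G.Adj u v → ¬(σ u = 1 ∧ σ v = 1) then
    lam ^ (univ.filter fun v => σ v = 1).card
  else 0

/-- The hardcore distribution on `G` with fugacity `lam`. -/
noncomputable def hardcoreDist (G : SimpleGraph (Fin n)) (lam : ℝ) : Config n 2 → ℝ :=
  fun σ => hcWeight G lam σ / ∑ σ' : Config n 2, hcWeight G lam σ'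

/-- The tree uniqueness threshold `λ_c(Δ)`. -/
noncomputable def lambdaC (Δ : ℕ) : ℝ := ((Δ : ℝ) - 1) ^ (Δ - 1) / ((Δ : ℝ) - 2) ^ Δ

/-- `G` is bipartite with parts `VL` and `VLᶜ`. -/
def Bipartite (G : SimpleGraph (Fin n)) (VL : Finset (Fin n)) : Prop :=
  ∀ u v, G.Adj u v → (u ∈ VL ↔ v ∉ VL)

/-- Maximum degree of `G` among the vertices of `W`. -/
noncomputable def maxDegOn (G : SimpleGraph (Fin n)) (W : Finset (Fin n)) : ℕ :=
  W.sup fun v => degIn G univ v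

/-- The marginal of `μ` on `W`, realized as a distribution on full configurations
that vanish (take spin `0`) outside of `W`. -/
noncomputable def marginalOn (μ : Config n 2 → ℝ) (W : Finset (Fin n)) :
    Config n 2 → ℝ :=
  fun σ => if ∀ v, v ∉ W → σ v = 0 then
      ∑ σ' ∈ univ.filter (fun σ' : Config n 2 => ∀ v ∈ W, σ' v = σ v), μ σ'
    else 0

/-- Proper list colorings of `G` with lists `L`. -/
noncomputable def properColorings (G : SimpleGraph (Fin n)) (L : Fin n → Finset (Fin q)) :
    Finset (Config n q) :=
  univ.filter fun σ => (∀ v, σ v ∈ L v) ∧ ∀ u v, G.Adj u v → σ u ≠ σ v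

/-- Uniform distribution over a finite set of configurations. -/
noncomputable def uniformOn (Ω : Finset (Config n q)) : Config n q → ℝ :=
  fun σ => if σ ∈ Ω then (1 : ℝ) / (Ω.card : ℝ) else 0

/-- The subgraph of `G` induced on `W` (kept on the same vertex type). -/
def restrictG (G : SimpleGraph (Fin n)) (W : Finset (Fin n)) : SimpleGraph (Fin n) where
  Adj u v := G.Adj u v ∧ u ∈ W ∧ v ∈ W
  symm := ⟨fun u v h => ⟨G.adj_symm h.1, h.2.2, h.2.1⟩⟩
  loopless := ⟨fun v h => G.loopless.irrefl v h.1⟩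

/-- The vertex set of the connected component of `v` in `G[W]` (empty if `v ∉ W`). -/
noncomputable def compIn (G : SimpleGraph (Fin n)) (W : Finset (Fin n)) (v : Fin n) :
    Finset (Fin n) :=
  if v ∈ W then univ.filter (fun w => w ∈ W ∧ (restrictG G W).Reachable v w) else ∅

lemma sum_powersetCard_sum_sdiff_insert {α β : Type*} [DecidableEq α] [AddCommMonoid β]
    (s : Finset α) (m : ℕ) (g : Finset α → β) :
    ∑ R ∈ s.powersetCard m, ∑ j ∈ s \ R, g (insert j R)
      = (m + 1) • ∑ R ∈ s.powersetCard (m + 1), g R := by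
  have hcount : ∑ R ∈ s.powersetCard (m + 1), ∑ _j ∈ R, g R
      = (m + 1) • ∑ R ∈ s.powersetCard (m + 1), g R := by
    rw [smul_sum]
    exact sum_congr rfl fun R hR => by rw [sum_const, (mem_powersetCard.mp hR).2]
  rw [← hcount, sum_sigma', sum_sigma']
  refine sum_nbij' (fun p => ⟨insert p.2 p.1, p.2⟩) (fun p => ⟨p.1.erase p.2, p.2⟩)
      ?_ ?_ ?_ ?_ ?_ <;> rintro ⟨R, j⟩ hp <;>
    simp only [mem_sigma, mem_powersetCard, mem_sdiff] at hp
  · simp only [mem_sigma, mem_powersetCard]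
    exact ⟨⟨insert_subset hp.2.1 hp.1.1, by rw [card_insert_of_notMem hp.2.2, hp.1.2]⟩,
      mem_insert_self j R⟩
  · simp only [mem_sigma, mem_powersetCard, mem_sdiff]
    exact ⟨⟨(erase_subset j R).trans hp.1.1, by rw [card_erase_of_mem hp.2, hp.1.2]; rfl⟩,
      hp.1.1 hp.2, notMem_erase j R⟩
  · simp [erase_insert hp.2.2]
  · simp [insert_erase hp.2]
  · rfl

section Distributions
variable {n q : ℕ} {ν : Config n q → ℝ}

lemma varD_nonneg (hν : ∀ σ, 0 ≤ ν σ) (f : Config n q → ℝ) : 0 ≤ varD ν f :=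
  sum_nonneg fun σ _ => mul_nonneg (hν σ) (sq_nonneg _)

lemma restrictDist_nonneg (hν : ∀ σ, 0 ≤ ν σ) (T : Finset (Fin n)) (σ₀ σ : Config n q) :
    0 ≤ restrictDist ν T σ₀ σ :=
  div_nonneg (by split_ifs; exacts [hν σ, le_rfl]) (sum_nonneg fun σ' _ => hν σ')

lemma avgCondVar_nonneg (hν : ∀ σ, 0 ≤ ν σ) (Λ : Finset (Fin n)) (f : Config n q → ℝ) :
    0 ≤ avgCondVar ν Λ f :=
  sum_nonneg fun σ _ => mul_nonneg (hν σ) (varD_nonneg (restrictDist_nonneg hν _ σ) f)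

lemma agree_of_restrictDist_ne_zero {T : Finset (Fin n)} {σ₀ σ : Config n q}
    (h : restrictDist ν T σ₀ σ ≠ 0) : ∀ v ∈ T, σ v = σ₀ v := by
  by_contra hσ
  exact h (by rw [restrictDist, if_neg hσ, zero_div])

lemma restrictDist_congr {T : Finset (Fin n)} {σ₀ τ₀ : Config n q}
    (h : ∀ v ∈ T, σ₀ v = τ₀ v) : restrictDist ν T σ₀ = restrictDist ν T τ₀ := by
  have hiff : ∀ σ : Config n q, (∀ v ∈ T, σ v = σ₀ v) ↔ ∀ v ∈ T, σ v = τ₀ v :=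
    fun σ => forall₂_congr fun v hv => by rw [h v hv]
  unfold restrictDist
  simp_rw [hiff]

lemma sum_mul_restrictDist (hν : ∀ σ, 0 ≤ ν σ) (T : Finset (Fin n)) (τ : Config n q) :
    ∑ σ, ν σ * restrictDist ν T σ τ = ν τ := by
  set Z := ∑ σ ∈ univ.filter (fun σ : Config n q => ∀ v ∈ T, σ v = τ v), ν σ
  have hterm : ∀ σ, ν σ * restrictDist ν T σ τ
      = (if ∀ v ∈ T, σ v = τ v then ν σ else 0) * (ν τ / Z) := by
    intro σ
    by_cases hσ : ∀ v ∈ T, σ v = τ v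
    · rw [if_pos hσ, restrictDist_congr hσ, restrictDist, if_pos fun v _ => rfl]
    · rw [if_neg hσ, restrictDist, if_neg fun h => hσ fun v hv => (h v hv).symm]
      simp
  rw [sum_congr rfl fun σ _ => hterm σ, ← sum_mul, ← sum_filter]
  change Z * _ = _
  rcases eq_or_ne Z 0 with hZ | hZ
  · have hτ : ν τ ≤ Z := single_le_sum (fun σ _ => hν σ) (by simp)
    rw [hZ, zero_mul, le_antisymm (hZ ▸ hτ) (hν τ)]
  · exact mul_div_cancel₀ _ hZ

lemma restrictDist_restrictDist (hν : ∀ σ, 0 ≤ ν σ) {T T' : Finset (Fin n)} (hTT' : T ⊆ T')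
    {σ τ : Config n q} (hτ : ∀ v ∈ T, τ v = σ v) :
    restrictDist (restrictDist ν T σ) T' τ = restrictDist ν T' τ := by
  set Z := ∑ x ∈ univ.filter (fun x : Config n q => ∀ v ∈ T, x v = σ v), ν x
  set Z' := ∑ x ∈ univ.filter (fun x : Config n q => ∀ v ∈ T', x v = τ v), ν x
  have hfiber : ∀ x : Config n q, (∀ v ∈ T', x v = τ v) → ∀ v ∈ T, x v = σ v :=
    fun x hx v hv => (hx v (hTT' hv)).trans (hτ v hv)
  have hnum : ∀ x, (if ∀ v ∈ T', x v = τ v then restrictDist ν T σ x else 0)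
      = (if ∀ v ∈ T', x v = τ v then ν x else 0) / Z := by
    intro x
    split_ifs with hx
    · rw [restrictDist, if_pos (hfiber x hx)]
    · rw [zero_div]
  have hden : ∑ x ∈ univ.filter (fun x : Config n q => ∀ v ∈ T', x v = τ v),
      restrictDist ν T σ x = Z' / Z := by
    rw [sum_filter, sum_congr rfl fun x _ => hnum x, ← sum_div, ← sum_filter]
  funext x
  rw [restrictDist, hnum, hden]
  rcases eq_or_ne Z 0 with hZ | hZ
  · have hZ' : Z' = 0 := le_antisymm (hZ ▸ sum_le_sum_of_subset_of_nonneg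
      (fun x hx => by simp only [mem_filter] at hx ⊢; exact ⟨hx.1, hfiber x hx.2⟩)
      fun x _ _ => hν x) (sum_nonneg fun x _ => hν x)
    change _ = _ / Z'
    rw [hZ, hZ', div_zero, div_zero, zero_div]
  · exact div_div_div_cancel_right₀ hZ _ _

lemma sum_mul_avgCondVar_restrictDist (hν : ∀ σ, 0 ≤ ν σ) {T T' : Finset (Fin n)}
    (hTT' : T ⊆ T') (f : Config n q → ℝ) :
    ∑ σ, ν σ * avgCondVar (restrictDist ν T σ) T'ᶜ f = avgCondVar ν T'ᶜ f := by
  have hterm : ∀ σ τ, restrictDist ν T σ τ * varD (restrictDist (restrictDist ν T σ) T' τ) f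
      = restrictDist ν T σ τ * varD (restrictDist ν T' τ) f := by
    intro σ τ
    rcases eq_or_ne (restrictDist ν T σ τ) 0 with h | h
    · rw [h, zero_mul, zero_mul]
    · rw [restrictDist_restrictDist hν hTT' (agree_of_restrictDist_ne_zero h)]
  simp only [avgCondVar, compl_compl, hterm, mul_sum]
  rw [sum_comm]
  refine sum_congr rfl fun τ _ => ?_
  simp only [← mul_assoc, ← sum_mul, sum_mul_restrictDist hν]

lemma avgCondVar_univ (hν1 : ∑ σ, ν σ = 1) (f : Config n q → ℝ) :
    avgCondVar ν univ f = varD ν f := by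
  have hres : ∀ σ₀ : Config n q, restrictDist ν univᶜ σ₀ = ν := fun σ₀ => by
    funext σ
    simp [restrictDist, hν1]
  simp only [avgCondVar, hres, ← sum_mul, hν1, one_mul]

lemma varD_delta (x : Config n q) (g : Config n q → ℝ) : varD (delta x) g = 0 := by
  simp [varD, expVal, delta]

lemma restrictDist_delta (T : Finset (Fin n)) (x : Config n q) :
    restrictDist (delta x) T x = delta x := by
  funext σ
  by_cases hσ : σ = x <;> simp [restrictDist, delta, hσ]

lemma eq_delta_of_forall_varD_eq_zero (hν : ∀ σ, 0 ≤ ν σ) (h : ∀ g, varD ν g = 0)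
    {x : Config n q} (hx : ν x ≠ 0) : ν = delta x := by
  have hE : expVal ν (delta x) = ν x := by simp [expVal, delta]
  have hvar : ∑ σ, ν σ * (delta x σ - ν x) ^ 2 = 0 := by rw [← hE]; exact h (delta x)
  have hterm : ∀ σ, ν σ * (delta x σ - ν x) ^ 2 = 0 := fun σ =>
    (sum_eq_zero_iff_of_nonneg fun σ _ => mul_nonneg (hν σ) (sq_nonneg _)).mp hvar σ (mem_univ σ)
  funext σ
  by_cases hσ : σ = x
  · subst hσ
    have := hterm σ
    simp only [delta, if_true, mul_eq_zero, hx, false_or, pow_eq_zero_iff two_ne_zero,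
      sub_eq_zero] at this
    simp [delta, ← this]
  · simpa [delta, hσ, hx] using hterm σ

lemma avgCondVar_eq_zero_of_forall_varD_eq_zero (hν : ∀ σ, 0 ≤ ν σ)
    (h : ∀ g, varD ν g = 0) (Λ : Finset (Fin n)) (f : Config n q → ℝ) :
    avgCondVar ν Λ f = 0 := by
  refine sum_eq_zero fun σ _ => ?_
  rcases eq_or_ne (ν σ) 0 with hσ | hσ
  · rw [hσ, zero_mul]
  · rw [eq_delta_of_forall_varD_eq_zero hν h hσ, restrictDist_delta, varD_delta, mul_zero]

end Distributions

section LocalToGlobal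
variable {n q k : ℕ} {ν : Config n q → ℝ} {U : Fin k → Finset (Fin n)}

/-- `c` bounds the relaxation time of the `(k - r) ↔ 1` block down-up walk on every
conditional of `ν` given the blocks of an `r`-set of indices. -/
def PinnedBlockRelaxBound (ν : Config n q → ℝ) (U : Fin k → Finset (Fin n)) (r : ℕ) (c : ℝ) :
    Prop :=
  ∀ R : Finset (Fin k), R.card = r → ∀ σ, ν σ ≠ 0 → ∀ f : Config n q → ℝ,
    varD (restrictDist ν (unionBlocks U R) σ) f ≤
      c / ((k : ℝ) - r) * ∑ j ∈ univ \ R,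
        avgCondVar (restrictDist ν (unionBlocks U R) σ) (unionBlocks U (insert j R))ᶜ f

lemma unionBlocks_mono {R R' : Finset (Fin k)} (h : R ⊆ R') :
    unionBlocks U R ⊆ unionBlocks U R' :=
  biUnion_subset_biUnion_of_subset_left U h

lemma avgCondVar_le_sum_insert (hν : ∀ σ, 0 ≤ ν σ) {m : ℕ} {c : ℝ}
    (h : PinnedBlockRelaxBound ν U m c) {R : Finset (Fin k)} (hR : R.card = m)
    (f : Config n q → ℝ) :
    avgCondVar ν (unionBlocks U R)ᶜ f ≤
      c / ((k : ℝ) - m) * ∑ j ∈ univ \ R, avgCondVar ν (unionBlocks U (insert j R))ᶜ f := by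
  calc avgCondVar ν (unionBlocks U R)ᶜ f
      = ∑ σ, ν σ * varD (restrictDist ν (unionBlocks U R) σ) f := by
        simp only [avgCondVar, compl_compl]
    _ ≤ ∑ σ, ν σ * (c / ((k : ℝ) - m) * ∑ j ∈ univ \ R,
          avgCondVar (restrictDist ν (unionBlocks U R) σ) (unionBlocks U (insert j R))ᶜ f) := by
        refine sum_le_sum fun σ _ => ?_
        rcases eq_or_ne (ν σ) 0 with hσ | hσ
        · rw [hσ, zero_mul, zero_mul]
        · exact mul_le_mul_of_nonneg_left (h R hR σ hσ f) (hν σ)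
    _ = c / ((k : ℝ) - m) * ∑ j ∈ univ \ R, avgCondVar ν (unionBlocks U (insert j R))ᶜ f := by
        simp only [mul_sum, mul_left_comm (ν _)]
        rw [sum_comm]
        refine sum_congr rfl fun j _ => ?_
        rw [← mul_sum, sum_mul_avgCondVar_restrictDist hν (unionBlocks_mono (subset_insert j R))]

lemma sum_avgCondVar_powersetCard_le (hν : ∀ σ, 0 ≤ ν σ) {m : ℕ} {c : ℝ}
    (h : PinnedBlockRelaxBound ν U m c) (f : Config n q → ℝ) :
    ∑ R ∈ univ.powersetCard m, avgCondVar ν (unionBlocks U R)ᶜ f ≤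
      c / ((k : ℝ) - m) * ((m + 1) *
        ∑ R ∈ univ.powersetCard (m + 1), avgCondVar ν (unionBlocks U R)ᶜ f) := by
  calc ∑ R ∈ univ.powersetCard m, avgCondVar ν (unionBlocks U R)ᶜ f
      ≤ ∑ R ∈ univ.powersetCard m, c / ((k : ℝ) - m) *
          ∑ j ∈ univ \ R, avgCondVar ν (unionBlocks U (insert j R))ᶜ f :=
        sum_le_sum fun R hR => avgCondVar_le_sum_insert hν h (mem_powersetCard.mp hR).2 f
    _ = _ := by
        rw [← mul_sum, sum_powersetCard_sum_sdiff_insert univ m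
          (fun R => avgCondVar ν (unionBlocks U R)ᶜ f), nsmul_eq_mul]
        push_cast
        ring

lemma prod_div_choose_mul_succ {γ : ℕ → ℝ} {m : ℕ} (hmk : m < k) :
    (∏ i ∈ range m, γ i) / k.choose m * (γ m / ((k : ℝ) - m) * (m + 1))
      = (∏ i ∈ range (m + 1), γ i) / k.choose (m + 1) := by
  have hchoose := congrArg (Nat.cast : ℕ → ℝ) (Nat.choose_succ_right_eq k m)
  push_cast [Nat.cast_sub hmk.le] at hchoose
  have hkm : (k : ℝ) - m ≠ 0 := sub_ne_zero.mpr (by exact_mod_cast hmk.ne')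
  have hC : (k.choose m : ℝ) ≠ 0 := by exact_mod_cast (Nat.choose_pos hmk.le).ne'
  have hC' : (k.choose (m + 1) : ℝ) ≠ 0 := by exact_mod_cast (Nat.choose_pos hmk).ne'
  rw [prod_range_succ]
  field_simp
  linear_combination (∏ i ∈ range m, γ i) * γ m * hchoose

lemma varD_le_of_pinnedBlockRelaxBound_of_nonneg (hν : ∀ σ, 0 ≤ ν σ) (hν1 : ∑ σ, ν σ = 1)
    {γ : ℕ → ℝ} {m : ℕ} (hmk : m ≤ k) (hloc : ∀ r < m, PinnedBlockRelaxBound ν U r (γ r))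
    (hγ : ∀ r < m, 0 ≤ γ r) (f : Config n q → ℝ) :
    varD ν f ≤ (∏ i ∈ range m, γ i) / k.choose m *
      ∑ R ∈ univ.powersetCard m, avgCondVar ν (unionBlocks U R)ᶜ f := by
  induction m with
  | zero => simp [unionBlocks, avgCondVar_univ hν1]
  | succ m ih =>
    have hc : 0 ≤ (∏ i ∈ range m, γ i) / k.choose m :=
      div_nonneg (prod_nonneg fun i hi => hγ i (by simp at hi; omega)) (Nat.cast_nonneg _)
    calc varD ν f
        ≤ (∏ i ∈ range m, γ i) / k.choose m *
            ∑ R ∈ univ.powersetCard m, avgCondVar ν (unionBlocks U R)ᶜ f :=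
          ih (by omega) (fun r hr => hloc r (by omega)) (fun r hr => hγ r (by omega))
      _ ≤ (∏ i ∈ range m, γ i) / k.choose m * (γ m / ((k : ℝ) - m) * ((m + 1) *
            ∑ R ∈ univ.powersetCard (m + 1), avgCondVar ν (unionBlocks U R)ᶜ f)) :=
          mul_le_mul_of_nonneg_left (sum_avgCondVar_powersetCard_le hν (hloc m m.lt_succ_self) f) hc
      _ = _ := by rw [← prod_div_choose_mul_succ hmk]; ring

lemma avgCondVar_eq_zero_of_pinnedBlockRelaxBound_neg (hν : ∀ σ, 0 ≤ ν σ) {r : ℕ} {c : ℝ}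
    (h : PinnedBlockRelaxBound ν U r c) (hc : c < 0) (hrk : r < k) {R : Finset (Fin k)}
    (hR : r ≤ R.card) (f : Config n q → ℝ) :
    avgCondVar ν (unionBlocks U R)ᶜ f = 0 := by
  obtain ⟨R₀, hR₀R, hR₀⟩ := exists_subset_card_eq hR
  have hrigid : ∀ σ, ν σ ≠ 0 → ∀ g, varD (restrictDist ν (unionBlocks U R₀) σ) g = 0 := by
    refine fun σ hσ g => le_antisymm ((h R₀ hR₀ σ hσ g).trans ?_)
      (varD_nonneg (restrictDist_nonneg hν _ σ) g)
    have hkr : (0 : ℝ) < k - r := sub_pos.mpr (by exact_mod_cast hrk)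
    exact mul_nonpos_of_nonpos_of_nonneg (div_nonpos_of_nonpos_of_nonneg hc.le hkr.le)
      (sum_nonneg fun j _ => avgCondVar_nonneg (restrictDist_nonneg hν _ σ) _ g)
  rw [← sum_mul_avgCondVar_restrictDist hν (unionBlocks_mono hR₀R)]
  refine sum_eq_zero fun σ _ => ?_
  rcases eq_or_ne (ν σ) 0 with hσ | hσ
  · rw [hσ, zero_mul]
  · rw [avgCondVar_eq_zero_of_forall_varD_eq_zero (restrictDist_nonneg hν _ σ) (hrigid σ hσ),
      mul_zero]

theorem varD_le_of_pinnedBlockRelaxBound (hν : ∀ σ, 0 ≤ ν σ) (hν1 : ∑ σ, ν σ = 1)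
    {γ : ℕ → ℝ} {ℓ : ℕ} (hℓ : ℓ < k) (hloc : ∀ r < ℓ, PinnedBlockRelaxBound ν U r (γ r))
    (f : Config n q → ℝ) :
    varD ν f ≤ (∏ i ∈ range ℓ, γ i) / k.choose ℓ *
      ∑ R ∈ univ.powersetCard ℓ, avgCondVar ν (unionBlocks U R)ᶜ f := by
  by_cases hγ : ∀ r < ℓ, 0 ≤ γ r
  · exact varD_le_of_pinnedBlockRelaxBound_of_nonneg hν hν1 hℓ.le hloc hγ f
  -- a first negative `γ r` forces every conditional at level `r` to be a point mass
  push Not at hγ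
  let r := Nat.find hγ
  obtain ⟨hrℓ, hγr⟩ : r < ℓ ∧ γ r < 0 := Nat.find_spec hγ
  have hzero : ∀ R : Finset (Fin k), r ≤ R.card → avgCondVar ν (unionBlocks U R)ᶜ f = 0 :=
    fun R hR => avgCondVar_eq_zero_of_pinnedBlockRelaxBound_neg hν (hloc r hrℓ) hγr
      (hrℓ.trans hℓ) hR f
  have hvar := varD_le_of_pinnedBlockRelaxBound_of_nonneg (U := U) hν hν1 (hrℓ.trans hℓ).le
    (fun i hi => hloc i (hi.trans hrℓ)) (fun i hi => not_lt.mp fun hneg =>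
      Nat.find_min hγ hi ⟨hi.trans hrℓ, hneg⟩) f
  rw [sum_eq_zero fun R hR => hzero R (mem_powersetCard.mp hR).2.ge, mul_zero] at hvar
  rw [sum_eq_zero fun R hR => hzero R ((mem_powersetCard.mp hR).2 ▸ hrℓ.le), mul_zero]
  exact hvar

end LocalToGlobal

section Gibbs
variable {n q : ℕ} {G : SimpleGraph (Fin n)} (S : SpinSystem n q G)

lemma condWeight_nonneg (Λ : Finset (Fin n)) (τ σ : Config n q) : 0 ≤ condWeight S Λ τ σ :=
  mul_nonneg (mul_nonneg (by split_ifs <;> norm_num) (prod_nonneg fun v _ => S.b_nonneg _ _))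
    (prod_nonneg fun p _ => S.A_nonneg _ _ _ _)

lemma gibbsDist_nonneg (σ : Config n q) : 0 ≤ gibbsDist S σ :=
  div_nonneg (condWeight_nonneg S _ _ _) (sum_nonneg fun _ _ => condWeight_nonneg S _ _ _)

lemma sum_gibbsDist (hZ : ∑ σ, condWeight S univ σ σ ≠ 0) : ∑ σ, gibbsDist S σ = 1 := by
  simp only [gibbsDist, ← sum_div]
  exact div_self hZ

lemma exists_condWeight_univ_eq_mul (T : Finset (Fin n)) (σ₀ : Config n q) :
    ∃ K, ∀ σ : Config n q, (∀ v ∈ T, σ v = σ₀ v) →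
      condWeight S univ σ σ = K * condWeight S Tᶜ σ₀ σ := by
  refine ⟨(∏ v ∈ T, S.b v (σ₀ v)) * ∏ p ∈ (edgePairs G).filter (fun p => ¬(p.1 ∈ Tᶜ ∨ p.2 ∈ Tᶜ)),
    S.A p.1 p.2 (σ₀ p.1) (σ₀ p.2), fun σ hσ => ?_⟩
  have hb : ∏ v ∈ T, S.b v (σ v) = ∏ v ∈ T, S.b v (σ₀ v) :=
    prod_congr rfl fun v hv => by rw [hσ v hv]
  have hA : ∏ p ∈ (edgePairs G).filter (fun p => ¬(p.1 ∈ Tᶜ ∨ p.2 ∈ Tᶜ)),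
        S.A p.1 p.2 (σ p.1) (σ p.2)
      = ∏ p ∈ (edgePairs G).filter (fun p => ¬(p.1 ∈ Tᶜ ∨ p.2 ∈ Tᶜ)),
        S.A p.1 p.2 (σ₀ p.1) (σ₀ p.2) := by
    refine prod_congr rfl fun p hp => ?_
    simp only [mem_filter, mem_compl, not_or, not_not] at hp
    rw [hσ _ hp.2.1, hσ _ hp.2.2]
  have hW : condWeight S univ σ σ
      = (∏ v, S.b v (σ v)) * ∏ p ∈ edgePairs G, S.A p.1 p.2 (σ p.1) (σ p.2) := by
    simp [condWeight]
  have hW' : condWeight S Tᶜ σ₀ σ = (∏ v ∈ Tᶜ, S.b v (σ v)) *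
      ∏ p ∈ (edgePairs G).filter (fun p => p.1 ∈ Tᶜ ∨ p.2 ∈ Tᶜ), S.A p.1 p.2 (σ p.1) (σ p.2) := by
    rw [condWeight, if_pos fun v hv => hσ v (by simpa using hv), one_mul]
  rw [hW, hW', ← prod_mul_prod_compl T, ← prod_filter_mul_prod_filter_not (edgePairs G)
    (fun p => p.1 ∈ Tᶜ ∨ p.2 ∈ Tᶜ), hb, hA]
  ring

lemma restrictDist_gibbsDist {σ₀ : Config n q} (hσ₀ : gibbsDist S σ₀ ≠ 0) (T : Finset (Fin n)) :
    restrictDist (gibbsDist S) T σ₀ = condDist S Tᶜ σ₀ := by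
  obtain ⟨K, hK⟩ := exists_condWeight_univ_eq_mul S T σ₀
  set Z := ∑ σ, condWeight S univ σ σ
  have hZ : Z ≠ 0 := fun h => hσ₀ (by simp [gibbsDist, Z, h])
  have hfactor : ∀ σ, (if ∀ v ∈ T, σ v = σ₀ v then gibbsDist S σ else 0)
      = K * condWeight S Tᶜ σ₀ σ / Z := by
    intro σ
    split_ifs with hσ
    · rw [← hK σ hσ]; rfl
    · rw [condWeight, if_neg fun h => hσ fun v hv => h v (by simpa using hv)]
      simp
  have hK0 : K ≠ 0 := by
    rintro rfl
    exact hσ₀ (by simpa using hfactor σ₀)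
  funext σ
  rw [restrictDist, hfactor, sum_filter, sum_congr rfl fun σ _ => hfactor σ, ← sum_div,
    ← mul_sum, div_div_div_cancel_right₀ hZ, mul_div_mul_left _ _ hK0, condDist]

end Gibbs

theorem statement4_general {n q : ℕ} (G : SimpleGraph (Fin n)) (S : SpinSystem n q G)
    (k : ℕ) (U : Fin k → Finset (Fin n))
    (ℓ : ℕ) (hℓ : ℓ < k) (γ : ℕ → ℝ)
    (hloc : ∀ r : ℕ, r < ℓ → ∀ R : Finset (Fin k), R.card = r →
      ∀ (τ : Config n q) (f : Config n q → ℝ),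
        varD (condDist S (unionBlocks U R)ᶜ τ) f ≤
          γ r / ((k : ℝ) - (r : ℝ)) *
            ∑ j ∈ (univ : Finset (Fin k)) \ R,
              avgCondVar (condDist S (unionBlocks U R)ᶜ τ)
                (unionBlocks U (insert j R))ᶜ f) :
    ∀ f : Config n q → ℝ,
      varD (gibbsDist S) f ≤
        (∏ i ∈ Finset.range ℓ, γ i) / (k.choose ℓ : ℝ) *
          ∑ R ∈ (univ : Finset (Fin k)).powersetCard ℓ,
            avgCondVar (gibbsDist S) (unionBlocks U R)ᶜ f := by
  intro f
  rcases eq_or_ne (∑ σ, condWeight S univ σ σ) 0 with hZ | hZ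
  · -- a vanishing partition function makes `gibbsDist S` identically zero
    simp [varD, expVal, avgCondVar, gibbsDist, hZ]
  refine varD_le_of_pinnedBlockRelaxBound (gibbsDist_nonneg S) (sum_gibbsDist S hZ) hℓ
    (fun r hr R hR σ hσ g => ?_) f
  rw [restrictDist_gibbsDist S hσ]
  exact hloc r hr R hR σ g

/-- Proposition 5.1: local-to-global.
If for every `0 ≤ r ≤ ℓ−1`, every `R ⊆ [k]` with `|R| = r` and every pinning
`τ` on `U_R` the `(k−r) ↔ 1` down-up walk on `μ^τ` has relaxation time at most
`γ_r` (expressed by the variance inequality), then the `k ↔ ℓ` down-up walk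
satisfies `T_rel(k,ℓ) ≤ ∏_{i<ℓ} γ_i` (expressed by the corresponding variance
inequality for `μ`). -/
theorem statement4 {n q : ℕ} (G : SimpleGraph (Fin n)) (S : SpinSystem n q G)
    (hq : 2 ≤ q) (hpos : PosCondMass S)
    (k : ℕ) (U : Fin k → Finset (Fin n)) (hU : IsPartition U)
    (ℓ : ℕ) (hℓ : ℓ < k) (γ : ℕ → ℝ)
    (hloc : ∀ r : ℕ, r < ℓ → ∀ R : Finset (Fin k), R.card = r →
      ∀ (τ : Config n q) (f : Config n q → ℝ),
        varD (condDist S (unionBlocks U R)ᶜ τ) f ≤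
          γ r / ((k : ℝ) - (r : ℝ)) *
            ∑ j ∈ (univ : Finset (Fin k)) \ R,
              avgCondVar (condDist S (unionBlocks U R)ᶜ τ)
                (unionBlocks U (insert j R))ᶜ f) :
    ∀ f : Config n q → ℝ,
      varD (gibbsDist S) f ≤
        (∏ i ∈ Finset.range ℓ, γ i) / (k.choose ℓ : ℝ) *
          ∑ R ∈ (univ : Finset (Fin k)).powersetCard ℓ,
            avgCondVar (gibbsDist S) (unionBlocks U R)ᶜ f :=
  statement4_general G S k U ℓ hℓ γ hloc

end Paper
end

section
/- Let G = (V_L ⊎ V_R, E) be a bipartite graph with maximum left degree Δ_L ≥ 1 and maximum right degree Δ_R, let n_L = |V_L|, let α ∈ (0, 1/2) with α·n_L ≥ 1, and let ℓ = ⌈α·n_L⌉. Sample a subset S uniformly at random among all subsets of V_L of size ℓ, and for a vertex v ∈ V_L ∪ V_R let S_v be the vertex set of the connected component of v in the induced subgraph G[S ∪ V_R] (with S_v = ∅ if v ∉ S ∪ V_R). Then for every k ≥ 1, Pr[|S_v| ≥ k] ≤ (e·(Δ_L + Δ_R))^k · (2α)^{(k−1)/Δ_L}. -/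
open Finset
open scoped BigOperators Classical

namespace Paper

variable {n q k : ℕ}

/-!
Explore the component `S_v` greedily from `v`, recording each newly reached vertex by a code
`c < (k - 1) D`, `D = Δ_L + Δ_R`, that names the position of its parent in the exploration order
(`c / D`) and its index in the parent's neighbour list (`c % D`). Always following the smallest
fresh code makes the codes increase, so the first `k - 1` steps are determined by their *set*
of codes, of which there are at most `C((k - 1) D, k - 1) ≤ (e D) ^ k`. The `k` explored vertices
span at least `k - 1` edges, each with an endpoint in `V_L`, so at least `(k - 1) / Δ_L` of them
lie in `V_L`, hence in `S`; and a uniform `ℓ`-subset of `V_L` contains a fixed `m`-subset with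
probability at most `(ℓ / n_L) ^ m ≤ (2 α) ^ m`. A union bound over the code sets concludes.
-/

section Exploration

variable {V : Type*} [Fintype V] (G : SimpleGraph V) [DecidableRel G.Adj]
  (D : ℕ) (C : Finset V) (v : V)

noncomputable def codeTarget (L : List V) (c : ℕ) : Option V :=
  L[c / D]?.bind fun u => (G.neighborFinset u).toList[c % D]?

def freshCodes (L : List V) : Set ℕ :=
  {c | ∃ w ∈ C, w ∉ L ∧ codeTarget G D L c = some w}

noncomputable def codesToVertices (cs : List ℕ) : List V :=
  cs.foldl (fun L c => L ++ [(codeTarget G D L c).getD v]) [v]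

noncomputable def exploreCodes : ℕ → List ℕ
  | 0 => []
  | m + 1 =>
    let cs := exploreCodes m
    cs ++ [sInf (freshCodes G D C (codesToVertices G D v cs))]

variable {G D C v}

lemma codesToVertices_append_singleton (cs : List ℕ) (c : ℕ) :
    codesToVertices G D v (cs ++ [c]) =
      codesToVertices G D v cs ++ [(codeTarget G D (codesToVertices G D v cs) c).getD v] := by
  simp [codesToVertices, List.foldl_append]

lemma length_codesToVertices (cs : List ℕ) :
    (codesToVertices G D v cs).length = cs.length + 1 := by
  induction cs using List.reverseRecOn with
  | nil => rfl
  | append_singleton cs c ih => simp [codesToVertices_append_singleton, ih]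

lemma mem_codesToVertices_self (cs : List ℕ) : v ∈ codesToVertices G D v cs := by
  induction cs using List.reverseRecOn with
  | nil => simp [codesToVertices]
  | append_singleton cs c ih => simp [codesToVertices_append_singleton, ih]

lemma length_exploreCodes (m : ℕ) : (exploreCodes G D C v m).length = m := by
  induction m with
  | zero => rfl
  | succ m ih => simp [exploreCodes, ih]

lemma div_lt_length_of_codeTarget {L : List V} {c : ℕ} {w : V}
    (h : codeTarget G D L c = some w) : c / D < L.length := by
  by_contra hc
  simp [codeTarget, List.getElem?_eq_none (not_lt.mp hc)] at h

lemma codeTarget_append {L : List V} (M : List V) {c : ℕ} (hc : c / D < L.length) :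
    codeTarget G D (L ++ M) c = codeTarget G D L c := by
  simp [codeTarget, List.getElem?_append_left hc]

lemma exists_adj_of_codeTarget {L : List V} {c : ℕ} {w : V} (h : codeTarget G D L c = some w) :
    ∃ u ∈ L, G.Adj u w := by
  obtain ⟨u, hu, hw⟩ := Option.bind_eq_some_iff.mp h
  exact ⟨u, List.mem_of_getElem? hu,
    (G.mem_neighborFinset u w).mp (Finset.mem_toList.mp (List.mem_of_getElem? hw))⟩

lemma lt_mul_of_codeTarget {L : List V} (hdeg : ∀ u ∈ L, G.degree u ≤ D) {c : ℕ} {w : V}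
    (h : codeTarget G D L c = some w) : c < L.length * D := by
  obtain ⟨u, hu, hw⟩ := Option.bind_eq_some_iff.mp h
  have hmod : c % D < D := by
    have := (List.getElem?_eq_some_iff.mp hw).1
    rw [Finset.length_toList, G.card_neighborFinset_eq_degree] at this
    exact this.trans_le (hdeg u (List.mem_of_getElem? hu))
  have hdiv := div_lt_length_of_codeTarget h
  calc c = D * (c / D) + c % D := (Nat.div_add_mod c D).symm
    _ < D * (c / D) + D := by omega
    _ = D * (c / D + 1) := by ring
    _ ≤ D * L.length := Nat.mul_le_mul_left D hdiv
    _ = L.length * D := Nat.mul_comm _ _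

lemma not_mem_freshCodes_append {L : List V} {w : V}
    (hw : codeTarget G D L (sInf (freshCodes G D C L)) = some w) {c' : ℕ}
    (hc' : c' ≤ sInf (freshCodes G D C L)) : c' ∉ freshCodes G D C (L ++ [w]) := by
  rintro ⟨x, hxC, hxL, hx⟩
  have hdiv : c' / D < L.length :=
    (Nat.div_le_div_right hc').trans_lt (div_lt_length_of_codeTarget hw)
  rw [codeTarget_append _ hdiv] at hx
  have hfresh : c' ∈ freshCodes G D C L := ⟨x, hxC, fun h => hxL (List.mem_append_left _ h), hx⟩
  obtain rfl : c' = sInf (freshCodes G D C L) := le_antisymm hc' (Nat.sInf_le hfresh)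
  rw [hw, Option.some_inj] at hx
  exact hxL (List.mem_append_right _ (List.mem_singleton.mpr hx.symm))

variable [DecidableEq V]

omit [Fintype V] [DecidableRel G.Adj] in
lemma card_edgeFinset_inter_sym2_lt_append [Fintype G.edgeSet] {L : List V} {u w : V}
    (hu : u ∈ L) (huw : G.Adj u w) (hw : w ∉ L) :
    #(G.edgeFinset ∩ L.toFinset.sym2) < #(G.edgeFinset ∩ (L ++ [w]).toFinset.sym2) := by
  refine card_lt_card ((ssubset_iff_of_subset ?_).mpr ⟨s(u, w), ?_, ?_⟩)
  · rw [List.toFinset_append]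
    exact inter_subset_inter_left (sym2_mono subset_union_left)
  · simp [mem_sym2_iff, huw, hu]
  · simp [mem_sym2_iff, hw]

variable (G D C v) in
structure IsGreedyCodes (cs : List ℕ) : Prop where
  nodup : (codesToVertices G D v cs).Nodup
  subset : ∀ x ∈ codesToVertices G D v cs, x ∈ C
  pairwise_lt : cs.Pairwise (· < ·)
  lt_mul : ∀ c ∈ cs, c < cs.length * D
  not_fresh : ∀ c ∈ cs, ∀ c' ≤ c, c' ∉ freshCodes G D C (codesToVertices G D v cs)
  length_le_card_edges :
    cs.length ≤ #(G.edgeFinset ∩ (codesToVertices G D v cs).toFinset.sym2)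

lemma IsGreedyCodes.append (hdeg : ∀ u ∈ C, G.degree u ≤ D) {cs : List ℕ}
    (h : IsGreedyCodes G D C v cs)
    (hne : (freshCodes G D C (codesToVertices G D v cs)).Nonempty) :
    IsGreedyCodes G D C v (cs ++ [sInf (freshCodes G D C (codesToVertices G D v cs))]) := by
  set L := codesToVertices G D v cs
  set c := sInf (freshCodes G D C L)
  obtain ⟨w, hwC, hwL, hw⟩ : c ∈ freshCodes G D C L := Nat.sInf_mem hne
  have hL : codesToVertices G D v (cs ++ [c]) = L ++ [w] := by
    rw [codesToVertices_append_singleton, hw, Option.getD_some]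
  have hlt : ∀ a ∈ cs, a < c := fun a ha =>
    lt_of_not_ge fun hca => h.not_fresh a ha c hca (Nat.sInf_mem hne)
  have hcL : c < L.length * D := lt_mul_of_codeTarget (fun u hu => hdeg u (h.subset u hu)) hw
  rw [length_codesToVertices] at hcL
  refine ⟨?_, ?_, ?_, ?_, ?_, ?_⟩
  · rw [hL]
    exact h.nodup.append (List.nodup_singleton w) (List.disjoint_singleton.mpr hwL)
  · intro x hx
    rcases List.mem_append.mp (hL ▸ hx) with hx | hx
    · exact h.subset x hx
    · rwa [List.mem_singleton.mp hx]
  · exact List.pairwise_append.mpr ⟨h.pairwise_lt, List.pairwise_singleton _ _,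
      fun a ha b hb => List.mem_singleton.mp hb ▸ hlt a ha⟩
  · intro a ha
    rw [List.length_append, List.length_singleton]
    rcases List.mem_append.mp ha with ha | ha
    · exact (h.lt_mul a ha).trans_le (Nat.mul_le_mul_right D (Nat.le_succ _))
    · rwa [List.mem_singleton.mp ha]
  · intro a ha c' hc'
    rw [hL]
    have hac : a ≤ c := by
      rcases List.mem_append.mp ha with ha | ha
      · exact (hlt a ha).le
      · exact (List.mem_singleton.mp ha).le
    exact not_mem_freshCodes_append hw (hc'.trans hac)
  · obtain ⟨u, huL, huw⟩ := exists_adj_of_codeTarget hw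
    rw [hL, List.length_append, List.length_singleton]
    exact h.length_le_card_edges.trans_lt (card_edgeFinset_inter_sym2_lt_append huL huw hwL)

variable (hdeg : ∀ u ∈ C, G.degree u ≤ D)
  (hcross : ∀ s ⊂ C, v ∈ s → ∃ u ∈ s, ∃ w ∈ C, w ∉ s ∧ G.Adj u w)

include hdeg hcross in
lemma IsGreedyCodes.freshCodes_nonempty {cs : List ℕ} (h : IsGreedyCodes G D C v cs)
    (hcs : cs.length + 1 < #C) : (freshCodes G D C (codesToVertices G D v cs)).Nonempty := by
  set L := codesToVertices G D v cs
  have hLC : L.toFinset ⊂ C := by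
    refine Finset.ssubset_iff_subset_ne.mpr ⟨fun x hx => h.subset x (List.mem_toFinset.mp hx), ?_⟩
    intro hLC
    rw [← hLC, List.toFinset_card_of_nodup h.nodup, length_codesToVertices] at hcs
    exact lt_irrefl _ hcs
  obtain ⟨u, hu, w, hwC, hwL, huw⟩ :=
    hcross _ hLC (List.mem_toFinset.mpr (mem_codesToVertices_self cs))
  obtain ⟨r, hr, rfl⟩ := List.mem_iff_getElem.mp (List.mem_toFinset.mp hu)
  obtain ⟨i, hi, hiw⟩ := List.mem_iff_getElem.mp
    (Finset.mem_toList.mpr ((G.mem_neighborFinset _ w).mpr huw))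
  have hiD : i < D := by
    rw [Finset.length_toList, G.card_neighborFinset_eq_degree] at hi
    exact hi.trans_le (hdeg _ (h.subset _ (List.getElem_mem hr)))
  refine ⟨i + D * r, w, hwC, fun h => hwL (List.mem_toFinset.mpr h), ?_⟩
  have hdiv : (i + D * r) / D = r := by
    rw [Nat.add_mul_div_left _ _ (by omega), Nat.div_eq_of_lt hiD, Nat.zero_add]
  have hmod : (i + D * r) % D = i := by
    rw [Nat.add_mul_mod_self_left, Nat.mod_eq_of_lt hiD]
  simp [codeTarget, hdiv, hmod, List.getElem?_eq_getElem hr, List.getElem?_eq_getElem hi,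
    hiw]

include hdeg hcross in
theorem isGreedyCodes_exploreCodes (hvC : v ∈ C) :
    ∀ m < #C, IsGreedyCodes G D C v (exploreCodes G D C v m)
  | 0, _ => ⟨List.nodup_singleton v, fun x hx => List.mem_singleton.mp hx ▸ hvC,
      List.Pairwise.nil, nofun, nofun, Nat.zero_le _⟩
  | m + 1, hm =>
    (isGreedyCodes_exploreCodes hvC m (by omega)).append hdeg
      ((isGreedyCodes_exploreCodes hvC m (by omega)).freshCodes_nonempty hdeg hcross
        (by rw [length_exploreCodes]; omega))

variable (G D v) in
noncomputable def exploredSet (P : Finset ℕ) : Finset V :=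
  (codesToVertices G D v (P.sort (· ≤ ·))).toFinset

include hdeg hcross in
theorem exists_codes_of_lt_card (hvC : v ∈ C) {m : ℕ} (hm : m < #C) :
    ∃ P ∈ (range (m * D)).powersetCard m,
      exploredSet G D v P ⊆ C ∧ m ≤ #(G.edgeFinset ∩ (exploredSet G D v P).sym2) := by
  set cs := exploreCodes G D C v m
  have h := isGreedyCodes_exploreCodes hdeg hcross hvC m hm
  have hlen : cs.length = m := length_exploreCodes m
  have hnodup : cs.Nodup := h.pairwise_lt.nodup
  have hsort : cs.toFinset.sort (· ≤ ·) = cs :=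
    (List.toFinset_sort _ hnodup).mpr (h.pairwise_lt.imp le_of_lt)
  refine ⟨cs.toFinset, mem_powersetCard.mpr ⟨fun c hc => ?_, ?_⟩, fun x hx => ?_, ?_⟩
  · exact mem_range.mpr (hlen ▸ h.lt_mul c (List.mem_toFinset.mp hc))
  · rw [List.toFinset_card_of_nodup hnodup, hlen]
  · rw [exploredSet, hsort] at hx
    exact h.subset x (List.mem_toFinset.mp hx)
  · rw [exploredSet, hsort, ← hlen]
    exact h.length_le_card_edges

end Exploration

lemma descFactorial_mul_pow_le {ℓ N : ℕ} (hℓN : ℓ ≤ N) (m : ℕ) :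
    ℓ.descFactorial m * N ^ m ≤ N.descFactorial m * ℓ ^ m := by
  induction m with
  | zero => simp
  | succ m ih =>
    have hstep : (ℓ - m) * N ≤ (N - m) * ℓ := by
      rw [Nat.sub_mul, Nat.sub_mul, Nat.mul_comm N ℓ]
      exact Nat.sub_le_sub_left (Nat.mul_le_mul_left m hℓN) _
    calc ℓ.descFactorial (m + 1) * N ^ (m + 1)
        = ℓ.descFactorial m * N ^ m * ((ℓ - m) * N) := by
          rw [Nat.descFactorial_succ, pow_succ]; ring
      _ ≤ N.descFactorial m * ℓ ^ m * ((N - m) * ℓ) := Nat.mul_le_mul ih hstep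
      _ = N.descFactorial (m + 1) * ℓ ^ (m + 1) := by
          rw [Nat.descFactorial_succ, pow_succ]; ring

lemma choose_sub_mul_pow_le {ℓ N m : ℕ} (hℓN : ℓ ≤ N) (hmℓ : m ≤ ℓ) :
    (N - m).choose (ℓ - m) * N ^ m ≤ N.choose ℓ * ℓ ^ m := by
  have hdesc : ℓ.choose m * N ^ m ≤ N.choose m * ℓ ^ m := by
    have := descFactorial_mul_pow_le hℓN m
    rw [Nat.descFactorial_eq_factorial_mul_choose, Nat.descFactorial_eq_factorial_mul_choose,
      Nat.mul_assoc, Nat.mul_assoc] at this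
    exact Nat.le_of_mul_le_mul_left this m.factorial_pos
  refine Nat.le_of_mul_le_mul_left ?_ (Nat.choose_pos (hmℓ.trans hℓN))
  calc N.choose m * ((N - m).choose (ℓ - m) * N ^ m)
      = N.choose ℓ * (ℓ.choose m * N ^ m) := by
        rw [← Nat.mul_assoc, ← Nat.choose_mul hmℓ]; ring
    _ ≤ N.choose ℓ * (N.choose m * ℓ ^ m) := Nat.mul_le_mul_left _ hdesc
    _ = N.choose m * (N.choose ℓ * ℓ ^ m) := by ring

lemma card_filter_powersetCard_superset_le {α : Type*} [DecidableEq α] {A U : Finset α}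
    (hAU : A ⊆ U) {ℓ : ℕ} (hℓU : ℓ ≤ #U) :
    (#{S ∈ U.powersetCard ℓ | A ⊆ S} : ℝ) ≤ (#U).choose ℓ * ((ℓ : ℝ) / #U) ^ #A := by
  rcases lt_or_ge ℓ #A with hAℓ | hAℓ
  · have : {S ∈ U.powersetCard ℓ | A ⊆ S} = ∅ := by
      refine filter_false_of_mem fun S hS hAS => ?_
      exact absurd (card_le_card hAS) (by rw [(mem_powersetCard.mp hS).2]; omega)
    rw [this, card_empty, Nat.cast_zero]
    positivity
  have hU : (0 : ℝ) < (#U : ℝ) ^ #A := by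
    rcases Nat.eq_zero_or_pos #A with hA | hA
    · simp [hA]
    · exact pow_pos (by exact_mod_cast hA.trans_le (card_le_card hAU)) _
  rw [card_filter_powersetCard_subset A U ℓ hAU hAℓ, div_pow, mul_div_assoc', le_div_iff₀ hU]
  exact_mod_cast choose_sub_mul_pow_le hℓU hAℓ

lemma choose_mul_le_exp_mul_pow (m D : ℕ) :
    ((m * D).choose m : ℝ) ≤ (Real.exp 1 * D) ^ m := by
  calc ((m * D).choose m : ℝ) ≤ ((m * D : ℕ) : ℝ) ^ m / m.factorial :=
        Nat.choose_le_pow_div m _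
    _ = D ^ m * ((m : ℝ) ^ m / m.factorial) := by push_cast; ring
    _ ≤ D ^ m * Real.exp m := by gcongr; exact Real.pow_div_factorial_le_exp _ m.cast_nonneg m
    _ = (Real.exp 1 * D) ^ m := by rw [← Real.exp_one_pow]; ring

lemma card_le_card_mul_of_subset_biUnion {ι β : Type*} [DecidableEq β] {E : Finset β}
    {s : Finset ι} {t : ι → Finset β} {b : ℝ} (h : E ⊆ s.biUnion t)
    (ht : ∀ i ∈ s, (#(t i) : ℝ) ≤ b) : (#E : ℝ) ≤ #s * b :=
  calc (#E : ℝ) ≤ #(s.biUnion t) := by exact_mod_cast card_le_card h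
    _ ≤ ∑ i ∈ s, (#(t i) : ℝ) := by exact_mod_cast card_biUnion_le
    _ ≤ #s * b := by simpa using sum_le_card_nsmul _ _ _ ht

lemma pow_le_rpow_of_pred_le_mul {x : ℝ} (hx0 : 0 ≤ x) (hx1 : x ≤ 1) {k m Δ : ℕ} (hk : 1 ≤ k)
    (hΔ : 0 < Δ) (h : k - 1 ≤ m * Δ) : x ^ m ≤ x ^ (((k : ℝ) - 1) / Δ) := by
  have hk' : (0 : ℝ) ≤ (k : ℝ) - 1 := by
    rw [sub_nonneg]; exact_mod_cast hk
  have h' : (k : ℝ) - 1 ≤ m * Δ := by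
    rw [← Nat.cast_one, ← Nat.cast_sub hk]; exact_mod_cast h
  rw [← Real.rpow_natCast]
  exact Real.rpow_le_rpow_of_exponent_ge' hx0 hx1 (by positivity)
    ((div_le_iff₀ (by exact_mod_cast hΔ)).mpr h')

lemma card_filter_powersetCard_superset_le_rpow {α : Type*} [DecidableEq α] {A U : Finset α}
    (hAU : A ⊆ U) {ℓ : ℕ} (hℓU : ℓ ≤ #U) {x : ℝ} (hx0 : 0 ≤ x) (hx1 : x ≤ 1)
    (hℓx : (ℓ : ℝ) ≤ x * #U) {k Δ : ℕ} (hk : 1 ≤ k) (hΔ : 0 < Δ) (hA : k - 1 ≤ #A * Δ) :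
    (#{S ∈ U.powersetCard ℓ | A ⊆ S} : ℝ) ≤ (#U).choose ℓ * x ^ (((k : ℝ) - 1) / Δ) := by
  refine (card_filter_powersetCard_superset_le hAU hℓU).trans ?_
  gcongr
  calc ((ℓ : ℝ) / #U) ^ #A ≤ x ^ #A := by
        gcongr; exact div_le_of_le_mul₀ (by positivity) hx0 hℓx
    _ ≤ x ^ (((k : ℝ) - 1) / Δ) := pow_le_rpow_of_pred_le_mul hx0 hx1 hk hΔ hA

lemma natCeil_mul_le {α N : ℝ} (hα0 : 0 < α) (hα1 : α < 1 / 2) (hαN : 1 ≤ α * N) :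
    (⌈α * N⌉₊ : ℝ) ≤ 2 * α * N ∧ (⌈α * N⌉₊ : ℝ) ≤ N := by
  have h := Nat.ceil_lt_add_one (by linarith : (0 : ℝ) ≤ α * N)
  have hN : 0 < N := pos_of_mul_pos_right (by linarith) hα0.le
  constructor <;> nlinarith

section Components

variable {G : SimpleGraph (Fin n)} {W : Finset (Fin n)} {v : Fin n}

lemma mem_compIn (hv : v ∈ W) {w : Fin n} :
    w ∈ compIn G W v ↔ w ∈ W ∧ (restrictG G W).Reachable v w := by
  simp [compIn, hv]

lemma compIn_subset : compIn G W v ⊆ W := by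
  unfold compIn
  split_ifs
  · exact fun w hw => (mem_filter.mp hw).2.1
  · exact empty_subset W

lemma exists_adj_of_ssubset_compIn {s : Finset (Fin n)} (hs : s ⊂ compIn G W v) (hvs : v ∈ s) :
    ∃ u ∈ s, ∃ w ∈ compIn G W v, w ∉ s ∧ G.Adj u w := by
  have hv : v ∈ W := compIn_subset (hs.subset hvs)
  obtain ⟨w₀, hw₀, hw₀s⟩ := exists_of_ssubset hs
  obtain ⟨p⟩ := ((mem_compIn hv).mp hw₀).2
  obtain ⟨d, -, hds, hdns⟩ := p.exists_boundary_dart s hvs hw₀s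
  obtain ⟨hadj, -, hsndW⟩ := d.adj
  have hfst := (mem_compIn hv).mp (hs.subset hds)
  exact ⟨_, hds, _, (mem_compIn hv).mpr ⟨hsndW, hfst.2.trans d.adj.reachable⟩, hdns, hadj⟩

lemma degree_le_maxDegOn {u : Fin n} (hu : u ∈ W) : G.degree u ≤ maxDegOn G W := by
  rw [← G.card_neighborFinset_eq_degree, G.neighborFinset_eq_filter]
  exact le_sup (f := degIn G univ) hu

lemma card_edgeFinset_inter_sym2_le {VL : Finset (Fin n)} (hbip : Bipartite G VL) {Δ : ℕ}
    (hΔ : ∀ u ∈ VL, G.degree u ≤ Δ) (T : Finset (Fin n)) :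
    #(G.edgeFinset ∩ T.sym2) ≤ #(T ∩ VL) * Δ := by
  have hcover : G.edgeFinset ∩ T.sym2 ⊆ (T ∩ VL).biUnion fun u => G.incidenceFinset u := by
    intro e he
    induction e using Sym2.ind with
    | _ a b =>
    simp only [mem_inter, SimpleGraph.mem_edgeFinset, SimpleGraph.mem_edgeSet, mem_sym2_iff,
      Sym2.mem_iff, forall_eq_or_imp, forall_eq] at he
    obtain ⟨hab, ha, hb⟩ := he
    simp only [mem_biUnion, mem_inter, SimpleGraph.mem_incidenceFinset,
      SimpleGraph.mk'_mem_incidenceSet_iff]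
    by_cases haL : a ∈ VL
    · exact ⟨a, ⟨ha, haL⟩, hab, Or.inl rfl⟩
    · exact ⟨b, ⟨hb, by simpa [haL] using hbip a b hab⟩, hab, Or.inr rfl⟩
  calc #(G.edgeFinset ∩ T.sym2) ≤ #((T ∩ VL).biUnion fun u => G.incidenceFinset u) :=
        card_le_card hcover
    _ ≤ #(T ∩ VL) * Δ := card_biUnion_le_card_mul _ _ _ fun u hu => by
      rw [G.card_incidenceFinset_eq_degree]
      exact hΔ u (mem_inter.mp hu).2

lemma degree_le_maxDegOn_add_compl (u : Fin n) :
    G.degree u ≤ maxDegOn G W + maxDegOn G Wᶜ := by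
  by_cases hu : u ∈ W
  · exact (degree_le_maxDegOn hu).trans (Nat.le_add_right _ _)
  · exact (degree_le_maxDegOn (mem_compl.mpr hu)).trans (Nat.le_add_left _ _)

theorem filter_le_card_compIn_subset_biUnion {VL : Finset (Fin n)} (hbip : Bipartite G VL)
    {ΔL D : ℕ} (hΔL : ∀ u ∈ VL, G.degree u ≤ ΔL) (hD : ∀ u, G.degree u ≤ D) {k : ℕ}
    (hk : 1 ≤ k) (ℓ : ℕ) :
    (VL.powersetCard ℓ).filter (fun S => k ≤ #(compIn G (S ∪ VLᶜ) v)) ⊆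
      (((range ((k - 1) * D)).powersetCard (k - 1)).filter
          fun P => k - 1 ≤ #(exploredSet G D v P ∩ VL) * ΔL).biUnion
        fun P => {S ∈ VL.powersetCard ℓ | exploredSet G D v P ∩ VL ⊆ S} := by
  intro S hS
  obtain ⟨hSℓ, hSk⟩ := mem_filter.mp hS
  have hv : v ∈ S ∪ VLᶜ := by
    by_contra hv
    simp [compIn, hv] at hSk
    omega
  obtain ⟨P, hP, hPC, hPedges⟩ := exists_codes_of_lt_card (fun u _ => hD u)
    (fun s hs hvs => exists_adj_of_ssubset_compIn hs hvs)
    ((mem_compIn hv).mpr ⟨hv, .refl v⟩) ((Nat.sub_lt hk Nat.one_pos).trans_le hSk)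
  refine mem_biUnion.mpr ⟨P, mem_filter.mpr ⟨hP, ?_⟩, mem_filter.mpr ⟨hSℓ, fun x hx => ?_⟩⟩
  · exact hPedges.trans (card_edgeFinset_inter_sym2_le hbip hΔL _)
  · obtain ⟨hxP, hxL⟩ := mem_inter.mp hx
    simpa [hxL] using compIn_subset (hPC hxP)

end Components

/-- Lemma 8.7: component-size tail bound.
Sample a uniformly random subset `S` of `V_L` of size `ℓ = ⌈α·n_L⌉` with
`α ∈ (0,1/2)` and `α·n_L ≥ 1`, and let `S_v` be the connected component of
`v` in `G[S ∪ V_R]`.  Then for every `k ≥ 1`,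
`Pr[|S_v| ≥ k] ≤ (e(Δ_L+Δ_R))^k · (2α)^((k−1)/Δ_L)`. -/
theorem statement16 {n : ℕ} (G : SimpleGraph (Fin n)) (VL : Finset (Fin n))
    (hbip : Bipartite G VL) (hΔL : 1 ≤ maxDegOn G VL)
    (α : ℝ) (hα0 : 0 < α) (hα1 : α < 1 / 2) (hαn : 1 ≤ α * (VL.card : ℝ))
    (ℓ : ℕ) (hℓ : ℓ = ⌈α * (VL.card : ℝ)⌉₊)
    (v : Fin n) (k : ℕ) (hk : 1 ≤ k) :
    (((VL.powersetCard ℓ).filter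
          (fun Sset => k ≤ (compIn G (Sset ∪ VLᶜ) v).card)).card : ℝ) /
        ((VL.powersetCard ℓ).card : ℝ) ≤
      (Real.exp 1 * ((maxDegOn G VL : ℝ) + (maxDegOn G VLᶜ : ℝ))) ^ k *
        (2 * α) ^ (((k : ℝ) - 1) / (maxDegOn G VL : ℝ)) := by
  set D := maxDegOn G VL + maxDegOn G VLᶜ
  set β := (2 * α) ^ (((k : ℝ) - 1) / (maxDegOn G VL : ℝ))
  obtain ⟨hℓα, hℓN⟩ := hℓ ▸ natCeil_mul_le hα0 hα1 hαn
  replace hℓN : ℓ ≤ #VL := by exact_mod_cast hℓN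
  set codes := ((range ((k - 1) * D)).powersetCard (k - 1)).filter
    fun P => k - 1 ≤ #(exploredSet G D v P ∩ VL) * maxDegOn G VL
  rw [card_powersetCard, div_le_iff₀ (by exact_mod_cast Nat.choose_pos hℓN)]
  calc _ ≤ #codes * ((#VL).choose ℓ * β) :=
        card_le_card_mul_of_subset_biUnion
          (filter_le_card_compIn_subset_biUnion hbip (fun u hu => degree_le_maxDegOn hu)
            degree_le_maxDegOn_add_compl hk ℓ)
          fun P hP => card_filter_powersetCard_superset_le_rpow inter_subset_right hℓN
            (by positivity) (by linarith) hℓα hk hΔL (mem_filter.mp hP).2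
    _ ≤ (Real.exp 1 * D) ^ (k - 1) * ((#VL).choose ℓ * β) := by
      gcongr
      calc (#codes : ℝ) ≤ #((range ((k - 1) * D)).powersetCard (k - 1)) := by
            exact_mod_cast card_filter_le _ _
        _ ≤ _ := by rw [card_powersetCard, card_range]; exact choose_mul_le_exp_mul_pow _ _
    _ ≤ (Real.exp 1 * D) ^ k * ((#VL).choose ℓ * β) := by
      gcongr
      · exact one_le_mul_of_one_le_of_one_le (Real.one_le_exp zero_le_one)
          (by exact_mod_cast hΔL.trans (Nat.le_add_right _ _))
      · omega
    _ = _ := by push_cast [D]; ring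

end Paper
end
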